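/- arXiv:2605.09062 — 3 statements merged into one kernel-verified Lean document; each statement's English description precedes it below -/
import Mathlib

section
/- On ℝ³ with the degenerate Poisson structure given by the constant matrix Π with Π₁₂ = 1 = −Π₂₁ and all other entries zero, Liouville vector field D(x) = (x₁, 0, x₃), and the ℝ⁺-action Φ_s(x) = (s(x₁+1)−1, x₂, s x₃), the function J(x) = x₂ is a conformal momentum map of degree 1 (i.e., ξ_M = Π∇(ξJ) + ξD for all ξ ∈ ℝ), but J is not a Casimir since Π∇J = (1,0,0) ≠ 0. -/
theorem fderiv_const_mul_apply_single {𝕜 ι : Type*} [NontriviallyNormedField 𝕜] [Fintype ι]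
    [DecidableEq ι] (c : 𝕜) (i j : ι) (x : ι → 𝕜) :
    fderiv 𝕜 (fun y : ι → 𝕜 => c * y i) x (Pi.single j 1) = (Pi.single i c : ι → 𝕜) j := by
  rw [((hasFDerivAt_apply i x).const_mul c).fderiv]
  simp [Pi.single_apply, eq_comm]

theorem stmt_3 :
    let grad : ((Fin 3 → ℝ) → ℝ) → (Fin 3 → ℝ) → (Fin 3 → ℝ) :=
      fun f x i => (fderiv ℝ f x) (Pi.single i 1)
    let Pi' : Matrix (Fin 3) (Fin 3) ℝ := !![0, 1, 0; -1, 0, 0; 0, 0, 0]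
    let J : (Fin 3 → ℝ) → ℝ := fun x => x 1
    let D : (Fin 3 → ℝ) → (Fin 3 → ℝ) := fun x => ![x 0, 0, x 2]
    -- J is a conformal momentum map of degree 1: ξ_M = Π ∇(ξJ) + ξ D
    (∀ (ξ : ℝ) (x : Fin 3 → ℝ),
        (ξ • ![x 0 + 1, 0, x 2] : Fin 3 → ℝ)
          = Pi'.mulVec (grad (fun y => ξ * J y) x) + ξ • D x) ∧
    -- but J is not a Casimir: Π ∇J = (1,0,0) ≠ 0
    (∀ x : Fin 3 → ℝ, Pi'.mulVec (grad J x) = ![1, 0, 0]) ∧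
    (![1, 0, 0] : Fin 3 → ℝ) ≠ 0 := by
  intro grad Pi' J D
  have grad_const_mul_J (c : ℝ) (x : Fin 3 → ℝ) : grad (fun y => c * J y) x = Pi.single 1 c :=
    funext fun j => fderiv_const_mul_apply_single c 1 j x
  have Pi'_mulVec_single (c : ℝ) : Pi'.mulVec (Pi.single 1 c) = ![c, 0, 0] := by
    ext i; fin_cases i <;> simp [Pi']
  refine ⟨fun ξ x => ?_, fun x => ?_, ?_⟩
  · rw [grad_const_mul_J, Pi'_mulVec_single]
    ext i; fin_cases i <;> simp [D, mul_add, add_comm]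
  · have grad_J : grad J x = Pi.single 1 1 := by simpa using grad_const_mul_J 1 x
    rw [grad_J, Pi'_mulVec_single]
  · simp [funext_iff, Fin.forall_fin_succ]
end

section
/- Consider ℝ³ with the so(2,1) Lie–Poisson tensor Π(x) = [[0, x₃, −x₂], [−x₃, 0, −x₁], [x₂, x₁, 0]] and Hamiltonian H(x) = ½(αx₁² + βx₂² + γx₃²) with −β < α < −γ. Set p = √(−(α+γ)/(β−γ)) and q = √((α+β)/(β−γ)). Then for every t > 0 and signs σ₂, σ₃ ∈ {±1}, the point x_e = t(1, σ₂p, σ₃q) satisfies X_H(x_e) = ξ x_e with ξ = σ₂σ₃ t √(−(α+γ)(α+β)) ≠ 0, where X_H(x) = Π(x)∇H(x). -/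
/-!
With `a = -(α+γ)`, `b = α+β`, `c = β-γ = a + b`, the point `t • (1, u, v)` is an eigenvector of the
quadratic field `x ↦ (c x₁x₂, a x₀x₂, b x₀x₁)` with eigenvalue `s t` as soon as `c u v = s`,
`a v = s u` and `b u = s v`. For `u = σ₂ √(a/c)`, `v = σ₃ √(b/c)` and `s = σ₂σ₃ √(ab)` these
are identities between square roots, valid because `a, b ≥ 0` and `c > 0`.
-/

def eulerField (a b c : ℝ) (x : Fin 3 → ℝ) : Fin 3 → ℝ :=
  ![c * x 1 * x 2, a * x 0 * x 2, b * x 0 * x 1]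

theorem eulerField_smul_ray {a b c u v s : ℝ} (hc : c * u * v = s) (ha : a * v = s * u)
    (hb : b * u = s * v) (t : ℝ) :
    eulerField a b c (t • ![1, u, v]) = (s * t) • (t • ![1, u, v]) := by
  ext i
  fin_cases i <;>
    simp only [eulerField, Fin.zero_eta, Fin.mk_one, Fin.reduceFinMk, Fin.isValue, Pi.smul_apply,
      smul_eq_mul, Matrix.cons_val, Matrix.cons_val_zero, Matrix.cons_val_one, Matrix.smul_cons,
      Matrix.smul_empty, mul_one]
  · linear_combination t ^ 2 * hc
  · linear_combination t ^ 2 * ha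
  · linear_combination t ^ 2 * hb

theorem mul_sqrt_div_mul_sqrt_div {a c : ℝ} (ha : 0 ≤ a) (hc : 0 < c) (b : ℝ) :
    c * (√(a / c) * √(b / c)) = √(a * b) := by
  have hab : a * b = c ^ 2 * (a / c * (b / c)) := by field_simp
  rw [hab, Real.sqrt_mul (sq_nonneg c), Real.sqrt_sq hc.le,
    Real.sqrt_mul (div_nonneg ha hc.le)]

theorem sqrt_mul_mul_sqrt_div {a b : ℝ} (ha : 0 ≤ a) (hb : 0 ≤ b) (c : ℝ) :
    √(a * b) * √(a / c) = a * √(b / c) := by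
  rw [← Real.sqrt_mul (mul_nonneg ha hb), show a * b * (a / c) = a ^ 2 * (b / c) by ring,
    Real.sqrt_mul (sq_nonneg a), Real.sqrt_sq ha]

theorem stmt_15 (α β γ : ℝ) (h1 : -β < α) (h2 : α < -γ) :
    let p : ℝ := Real.sqrt (-(α + γ) / (β - γ))
    let q : ℝ := Real.sqrt ((α + β) / (β - γ))
    let XH : (Fin 3 → ℝ) → (Fin 3 → ℝ) := fun x =>
      ![(β - γ) * x 1 * x 2, -(α + γ) * x 0 * x 2, (α + β) * x 0 * x 1]
    ∀ (t : ℝ), 0 < t → ∀ σ₂ σ₃ : ℝ, (σ₂ = 1 ∨ σ₂ = -1) → (σ₃ = 1 ∨ σ₃ = -1) →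
      XH (t • ![1, σ₂ * p, σ₃ * q])
          = (σ₂ * σ₃ * t * Real.sqrt (-((α + γ) * (α + β)))) • (t • ![1, σ₂ * p, σ₃ * q]) ∧
        σ₂ * σ₃ * t * Real.sqrt (-((α + γ) * (α + β))) ≠ 0 := by
  intro p q XH t ht σ₂ σ₃ hσ₂ hσ₃
  have ha : 0 < -(α + γ) := by linarith
  have hb : 0 < α + β := by linarith
  have hc : 0 < β - γ := by linarith
  have hσ₂sq : σ₂ * σ₂ = 1 := mul_self_eq_one_iff.mpr hσ₂
  have hσ₃sq : σ₃ * σ₃ = 1 := mul_self_eq_one_iff.mpr hσ₃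
  rw [← neg_mul]
  set r := √(-(α + γ) * (α + β))
  have hpq : (β - γ) * (p * q) = r := mul_sqrt_div_mul_sqrt_div ha.le hc _
  have hrp : r * p = -(α + γ) * q := sqrt_mul_mul_sqrt_div ha.le hb.le _
  have hrq : r * q = (α + β) * p := by
    rw [← sqrt_mul_mul_sqrt_div hb.le ha.le, mul_comm (α + β)]
  constructor
  · rw [show σ₂ * σ₃ * t * r = σ₂ * σ₃ * r * t by ring]
    exact eulerField_smul_ray (by linear_combination σ₂ * σ₃ * hpq)
      (by linear_combination (-σ₃) * hrp - σ₃ * r * p * hσ₂sq)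
      (by linear_combination (-σ₂) * hrq - σ₂ * r * q * hσ₃sq) t
  · have hr : 0 < r := Real.sqrt_pos.mpr (mul_pos ha hb)
    exact mul_ne_zero (mul_ne_zero (mul_ne_zero (left_ne_zero_of_mul_eq_one hσ₂sq)
      (left_ne_zero_of_mul_eq_one hσ₃sq)) ht.ne') hr.ne'
end

section
/- Suppose x = (x₁, x₂, x₃) ∈ ℝ³ and ξ ≠ 0 satisfy the system (β−γ)x₂x₃ = ξx₁, −(α+γ)x₁x₃ = ξx₂, (α+β)x₁x₂ = ξx₃, where β−γ > 0, α+β > 0, α+γ < 0, and x ≠ 0. Then x₁x₂x₃ ≠ 0, and moreover x₂²/x₁² = −(α+γ)/(β−γ) and x₃²/x₁² = (α+β)/(β−γ). -/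
/-!
STATEMENT 17. Suppose `x = (x₁,x₂,x₃) ∈ ℝ³` and `ξ ≠ 0` satisfy
`(β-γ) x₂ x₃ = ξ x₁`, `-(α+γ) x₁ x₃ = ξ x₂`, `(α+β) x₁ x₂ = ξ x₃`, where
`β-γ > 0`, `α+β > 0`, `α+γ < 0`, and `x ≠ 0`.  Then `x₁ x₂ x₃ ≠ 0`, and
`x₂²/x₁² = -(α+γ)/(β-γ)` and `x₃²/x₁² = (α+β)/(β-γ)`.
-/
theorem stmt_17 (α β γ ξ : ℝ) (x : Fin 3 → ℝ)
    (hβγ : 0 < β - γ) (hαβ : 0 < α + β) (hαγ : α + γ < 0)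
    (hx : x ≠ 0) (hξ : ξ ≠ 0)
    (e1 : (β - γ) * x 1 * x 2 = ξ * x 0)
    (e2 : -(α + γ) * x 0 * x 2 = ξ * x 1)
    (e3 : (α + β) * x 0 * x 1 = ξ * x 2) :
    x 0 * x 1 * x 2 ≠ 0 ∧
      (x 1) ^ 2 / (x 0) ^ 2 = -(α + γ) / (β - γ) ∧
      (x 2) ^ 2 / (x 0) ^ 2 = (α + β) / (β - γ) := by
  have h0 : x 0 ≠ 0 := by
    intro h
    have h1 : x 1 = 0 := by
      have := e2; rw [h] at this; simpa [hξ] using this.symm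
    have h2 : x 2 = 0 := by
      have := e3; rw [h] at this; simpa [hξ] using this.symm
    exact hx (funext fun i => by fin_cases i <;> simp [h, h1, h2])
  have h1 : x 1 ≠ 0 := by
    intro h
    apply h0
    have := e1; rw [h] at this; simpa [hξ] using this.symm
  have h2 : x 2 ≠ 0 := by
    intro h
    apply h0
    have := e1; rw [h] at this; simpa [hξ] using this.symm
  have hA : x 0 * x 2 * ((β - γ) * (α + β) * (x 1)^2) = x 0 * x 2 * ξ^2 := by
    linear_combination ((α + β) * x 0 * x 1) * e1 + (ξ * x 0) * e3
  have hA' := mul_left_cancel₀ (mul_ne_zero h0 h2) hA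
  have hB : x 1 * x 2 * (-(α + γ) * (α + β) * (x 0)^2) = x 1 * x 2 * ξ^2 := by
    linear_combination ((α + β) * x 0 * x 1) * e2 + (ξ * x 1) * e3
  have hB' := mul_left_cancel₀ (mul_ne_zero h1 h2) hB
  have hC : x 0 * x 1 * ((β - γ) * (-(α + γ)) * (x 2)^2) = x 0 * x 1 * ξ^2 := by
    linear_combination (-(α + γ) * x 0 * x 2) * e1 + (ξ * x 0) * e2
  have hC' := mul_left_cancel₀ (mul_ne_zero h0 h1) hC
  have hD : (β - γ) * (x 1)^2 = -(α + γ) * (x 0)^2 :=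
    mul_left_cancel₀ hαβ.ne' (by linear_combination hA' - hB')
  have hE : (β - γ) * (x 2)^2 = (α + β) * (x 0)^2 :=
    mul_left_cancel₀ (neg_pos.mpr hαγ).ne' (by linear_combination hC' - hB')
  refine ⟨by positivity, ?_, ?_⟩
  · field_simp
    linear_combination hD
  · field_simp
    linear_combination hE
end
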